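/- arXiv:2311.00349 — 3 statements merged into one kernel-verified Lean document; each statement's English description precedes it below -/
import Mathlib

section
/- The bracket [w^{a,b}_γ, w^{c,d}_{γ'}] = -(ad-bc) w^{a+c,b+d}_{γ⋆γ'} + δ_{a+c,0} δ_{b+d,0} ⟨γ,γ'⟩ (a c_s + b c_t) on the vector space ⊕_{r,d∈ℤ} g_{r,d} ⊕ ℚc_s ⊕ ℚc_t, where each g_{r,d} ≅ A for a supercommutative Frobenius algebra A with supersymmetric invariant pairing ⟨-,-⟩ and associative supercommutative product ⋆, satisfies the super Jacobi identity, i.e. defines a Lie superalgebra structure. -/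
/-- The underlying vector space `⊕_{(a,b)∈ℤ²} A·w^{a,b} ⊕ ℚc_s ⊕ ℚc_t` of the
toroidal Lie superalgebra modelled on a supercommutative Frobenius algebra `A`. -/
abbrev TorSpace (A : Type*) [AddCommGroup A] [Module ℚ A] :=
  ((ℤ × ℤ) → A) × ℚ × ℚ

variable {A : Type*} [AddCommGroup A] [Module ℚ A]

/-- The generator `w^{a,b}_γ`. -/
def wElt (a b : ℤ) (γ : A) : TorSpace A :=
  (fun p => if p = (a, b) then γ else 0, 0, 0)

/-- The central element `s·c_s + t·c_t`. -/
def cElt (A : Type*) [AddCommGroup A] [Module ℚ A] (s t : ℚ) : TorSpace A :=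
  (0, s, t)

/-- The bracket
`[w^{a,b}_γ, w^{c,d}_{γ'}] = -(ad-bc) w^{a+c,b+d}_{γ⋆γ'} + δ_{a+c,0}δ_{b+d,0}⟨γ,γ'⟩(a c_s + b c_t)`
on generators, for a product `mul = ⋆` and a pairing `pair = ⟨-,-⟩` on `A`. -/
def brkW (mul : A →ₗ[ℚ] A →ₗ[ℚ] A) (pair : A →ₗ[ℚ] A →ₗ[ℚ] ℚ)
    (a b : ℤ) (γ : A) (c d : ℤ) (γ' : A) : TorSpace A :=
  wElt (a + c) (b + d) (((-(a * d - b * c) : ℤ) : ℚ) • mul γ γ')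
    + (if a + c = 0 ∧ b + d = 0 then
         cElt A ((a : ℚ) * pair γ γ') ((b : ℚ) * pair γ γ') else 0)

/-- The iterated bracket `[[w^{a,b}_γ, w^{c,d}_{γ'}], w^{e,f}_{γ''}]` (the central
part of the inner bracket brackets to zero). -/
def brk2 (mul : A →ₗ[ℚ] A →ₗ[ℚ] A) (pair : A →ₗ[ℚ] A →ₗ[ℚ] ℚ)
    (a b c d e f : ℤ) (γ γ' γ'' : A) : TorSpace A :=
  brkW mul pair (a + c) (b + d) (((-(a * d - b * c) : ℤ) : ℚ) • mul γ γ') e f γ''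

lemma wElt_smul (s : ℚ) (a b : ℤ) (x : A) : s • wElt a b x = wElt a b (s • x) := by
  simp only [wElt, Prod.smul_mk, smul_zero]
  congr 1
  funext pt
  simp only [Pi.smul_apply]
  split <;> simp

lemma wElt_add (a b : ℤ) (x y : A) : wElt a b x + wElt a b y = wElt a b (x + y) := by
  simp only [wElt, Prod.mk_add_mk, add_zero]
  congr 1
  funext pt
  simp only [Pi.add_apply]
  split <;> simp

lemma wElt_zero (a b : ℤ) : wElt a b (0 : A) = 0 := by
  simp only [wElt]
  refine Prod.ext ?_ rfl
  funext pt
  simp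

lemma cElt_smul (q s t : ℚ) : q • cElt A s t = cElt A (q * s) (q * t) := by
  simp [cElt, Prod.smul_mk, smul_eq_mul]

lemma cElt_add (s t u v : ℚ) : cElt A s t + cElt A u v = cElt A (s + u) (t + v) := by
  simp [cElt, Prod.mk_add_mk]

lemma cElt_zero : cElt A 0 0 = 0 := rfl

/-- the bracket
`[w^{a,b}_γ, w^{c,d}_{γ'}] = -(ad-bc) w^{a+c,b+d}_{γ⋆γ'} + δ_{a+c,0}δ_{b+d,0}⟨γ,γ'⟩(a c_s + b c_t)`
on `⊕_{r,d∈ℤ} g_{r,d} ⊕ ℚc_s ⊕ ℚc_t` (each `g_{r,d} ≅ A`, for a supercommutative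
Frobenius algebra `A` with supersymmetric invariant pairing), satisfies the super
Jacobi identity on homogeneous elements: it defines a Lie superalgebra. -/
theorem toroidal_super_jacobi
    (mul : A →ₗ[ℚ] A →ₗ[ℚ] A) (pair : A →ₗ[ℚ] A →ₗ[ℚ] ℚ)
    -- `⋆` is associative
    (hassoc : ∀ x y z : A, mul (mul x y) z = mul x (mul y z))
    -- the pairing is invariant: `⟨x⋆y, z⟩ = ⟨x, y⋆z⟩`
    (hinv : ∀ x y z : A, pair (mul x y) z = pair x (mul y z))
    -- homogeneous elements `γ, γ', γ''` of parities `p, q, r`: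
    (p q r : ℕ) (γ γ' γ'' : A)
    -- `⋆` is supercommutative on them
    (hc12 : mul γ γ' = ((-1 : ℚ) ^ (p * q)) • mul γ' γ)
    (hc23 : mul γ' γ'' = ((-1 : ℚ) ^ (q * r)) • mul γ'' γ')
    (hc31 : mul γ'' γ = ((-1 : ℚ) ^ (r * p)) • mul γ γ'')
    -- the pairing is supersymmetric on them
    (hs12 : pair γ γ' = ((-1 : ℚ) ^ (p * q)) • pair γ' γ)
    (hs23 : pair γ' γ'' = ((-1 : ℚ) ^ (q * r)) • pair γ'' γ')
    (hs31 : pair γ'' γ = ((-1 : ℚ) ^ (r * p)) • pair γ γ'')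
    (a b c d e f : ℤ) :
    ((-1 : ℚ) ^ (p * r)) • brk2 mul pair a b c d e f γ γ' γ''
      + ((-1 : ℚ) ^ (q * p)) • brk2 mul pair c d e f a b γ' γ'' γ
      + ((-1 : ℚ) ^ (r * q)) • brk2 mul pair e f a b c d γ'' γ γ' = 0 := by
  have sq : ∀ n : ℕ, ((-1:ℚ)^n) * ((-1:ℚ)^n) = 1 := fun n => by
    rw [← mul_pow]; norm_num
  have hc12' : mul γ' γ = ((-1:ℚ)^(p*q)) • mul γ γ' := by
    rw [hc12, smul_smul, sq, one_smul]
  have hc23' : mul γ'' γ' = ((-1:ℚ)^(q*r)) • mul γ' γ'' := by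
    rw [hc23, smul_smul, sq, one_smul]
  have h2 : mul (mul γ' γ'') γ
      = ((-1:ℚ)^(r*p) * (-1:ℚ)^(p*q)) • mul (mul γ γ') γ'' := by
    rw [hassoc, hc31, map_smul, ← hassoc, hc12', map_smul, LinearMap.smul_apply, smul_smul]
  have h3 : mul (mul γ'' γ) γ'
      = ((-1:ℚ)^(r*p) * (-1:ℚ)^(q*r)) • mul (mul γ γ') γ'' := by
    rw [hc31, map_smul, LinearMap.smul_apply, hassoc, hc23', map_smul, ← hassoc, smul_smul]
  have hp2 : pair (mul γ' γ'') γ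
      = ((-1:ℚ)^(r*p) * (-1:ℚ)^(p*q)) • pair (mul γ γ') γ'' := by
    rw [hinv, hc31, map_smul, ← hinv, hc12', map_smul, LinearMap.smul_apply, smul_smul]
  have hp3 : pair (mul γ'' γ) γ'
      = ((-1:ℚ)^(r*p) * (-1:ℚ)^(q*r)) • pair (mul γ γ') γ'' := by
    rw [hc31, map_smul, LinearMap.smul_apply, hinv, hc23', map_smul, ← hinv, smul_smul]
  rw [Nat.mul_comm p r, Nat.mul_comm q p, Nat.mul_comm r q]
  simp only [brk2, brkW, map_smul, LinearMap.smul_apply, smul_smul]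
  rw [show c + e + a = a + c + e from by ring, show d + f + b = b + d + f from by ring,
      show e + a + c = a + c + e from by ring, show f + b + d = b + d + f from by ring]
  have hw : ((-1:ℚ)) ^ (r * p) •
          wElt (a + c + e) (b + d + f)
            ((((-((a + c) * f - (b + d) * e) : ℤ) : ℚ) * ((-(a * d - b * c) : ℤ) : ℚ)) •
              mul (mul γ γ') γ'') +
        ((-1:ℚ)) ^ (p * q) •
          wElt (a + c + e) (b + d + f)
            ((((-((c + e) * b - (d + f) * a) : ℤ) : ℚ) * ((-(c * f - d * e) : ℤ) : ℚ)) •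
              mul (mul γ' γ'') γ) +
      ((-1:ℚ)) ^ (q * r) •
        wElt (a + c + e) (b + d + f)
          ((((-((e + a) * d - (f + b) * c) : ℤ) : ℚ) * ((-(e * b - f * a) : ℤ) : ℚ)) •
            mul (mul γ'' γ) γ') = 0 := by
    rw [h2, h3]
    simp only [wElt_smul, smul_smul, wElt_add]
    convert wElt_zero (a + c + e) (b + d + f) using 2
    rw [← add_smul, ← add_smul]
    apply smul_eq_zero_of_left
    push_cast
    linear_combination
      ((-(((c:ℚ) + e) * b - ((d:ℚ) + f) * a)) * (-((c:ℚ) * f - (d:ℚ) * e)) * (-1:ℚ) ^ (r * p)) *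
          sq (p * q) +
        ((-(((e:ℚ) + a) * d - ((f:ℚ) + b) * c)) * (-((e:ℚ) * b - (f:ℚ) * a)) * (-1:ℚ) ^ (r * p)) *
          sq (q * r)
  by_cases hC : a + c + e = 0 ∧ b + d + f = 0
  · simp only [if_pos hC]
    obtain ⟨h1, h2''⟩ := hC
    have he : (e : ℚ) = -((a:ℚ) + c) := by
      have := congrArg (Int.cast : ℤ → ℚ) h1; push_cast at this; linarith
    have hf : (f : ℚ) = -((b:ℚ) + d) := by
      have := congrArg (Int.cast : ℤ → ℚ) h2''; push_cast at this; linarith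
    have hcent : ((-1:ℚ)) ^ (r * p) •
            cElt A (((a + c : ℤ) : ℚ) * ((-(a * d - b * c) : ℤ) : ℚ) • pair (mul γ γ') γ'')
              (((b + d : ℤ) : ℚ) * ((-(a * d - b * c) : ℤ) : ℚ) • pair (mul γ γ') γ'') +
          ((-1:ℚ)) ^ (p * q) •
            cElt A (((c + e : ℤ) : ℚ) * ((-(c * f - d * e) : ℤ) : ℚ) • pair (mul γ' γ'') γ)
              (((d + f : ℤ) : ℚ) * ((-(c * f - d * e) : ℤ) : ℚ) • pair (mul γ' γ'') γ) +
        ((-1:ℚ)) ^ (q * r) •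
          cElt A (((e + a : ℤ) : ℚ) * ((-(e * b - f * a) : ℤ) : ℚ) • pair (mul γ'' γ) γ')
            (((f + b : ℤ) : ℚ) * ((-(e * b - f * a) : ℤ) : ℚ) • pair (mul γ'' γ) γ') = 0 := by
      rw [hp2, hp3]
      simp only [cElt_smul, cElt_add, smul_eq_mul]
      rw [← cElt_zero]
      congr 1
      · push_cast
        rw [he, hf]
        linear_combination
          (((a:ℚ) * d - b * c) * a * (-1:ℚ) ^ (r * p) * pair (mul γ γ') γ'') * sq (p * q) +
            (((a:ℚ) * d - b * c) * c * (-1:ℚ) ^ (r * p) * pair (mul γ γ') γ'') * sq (q * r)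
      · push_cast
        rw [he, hf]
        linear_combination
          (((a:ℚ) * d - b * c) * b * (-1:ℚ) ^ (r * p) * pair (mul γ γ') γ'') * sq (p * q) +
            (((a:ℚ) * d - b * c) * d * (-1:ℚ) ^ (r * p) * pair (mul γ γ') γ'') * sq (q * r)
    simp only [smul_add]
    rw [show ∀ w1 c1 w2 c2 w3 c3 : TorSpace A,
          w1 + c1 + (w2 + c2) + (w3 + c3) = w1 + w2 + w3 + (c1 + c2 + c3) from
        fun _ _ _ _ _ _ => by abel]
    rw [hw, hcent, add_zero]
  · simp only [if_neg hC, add_zero]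
    exact hw
end

section
/- Let A_tor be the Lie algebra with basis {x_{a,b}}_{(a,b)∈ℤ²}, {k_{a,b}}_{(a,b)∈ℤ²∖{(0,0)}}, and central elements k_s, k_t, where x denotes d (derivation) generators, with brackets [d_{a,b}, d_{c,d}] = -(ad-bc) d_{a+c,b+d}, [d_{a,b}, k_{c,d}] = -(ad-bc) k_{a+c,b+d} + δ_{a+c,0}δ_{b+d,0}(a k_s + b k_t), and k's pairwise commuting and commuting with k_s, k_t. Then this bracket satisfies the Jacobi identity. -/
/-- Coefficient functions on `ℤ²` (for the families `d_{a,b}` resp. `k_{a,b}`). -/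
abbrev TorCoef := (ℤ × ℤ) →₀ ℚ

/-- The toroidal extended affine Lie algebra of `𝔤𝔩₀`:
`⊕ ℚ d_{a,b} ⊕ ⊕ ℚ k_{a,b} ⊕ ℚ k_s ⊕ ℚ k_t` (first factor: `d`-coefficients,
second: `k`-coefficients, then the coefficients of `k_s` and `k_t`). -/
abbrev TorEALA := TorCoef × TorCoef × ℚ × ℚ

/-- The bilinear convolution implementing
`x_{a,b} ⊗ y_{c,d} ↦ -(ad-bc)·(xy)_{a+c,b+d}`. -/
noncomputable def torConv (x y : TorCoef) : TorCoef :=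
  x.sum fun p xp => y.sum fun q yq =>
    Finsupp.single (p + q) (((-(p.1 * q.2 - p.2 * q.1) : ℤ) : ℚ) * xp * yq)

/-- The central cocycle: `d_{a,b} ⊗ k_{c,d} ↦ δ_{a+c,0}δ_{b+d,0}(a k_s + b k_t)`. -/
noncomputable def torCen (x y : TorCoef) : ℚ × ℚ :=
  (x.sum fun p xp => xp * y (-p) * (p.1 : ℚ),
   x.sum fun p xp => xp * y (-p) * (p.2 : ℚ))

/-- The bracket of the toroidal extended affine Lie algebra of `𝔤𝔩₀`:
`[d_{a,b}, d_{c,d}] = -(ad-bc) d_{a+c,b+d}`,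
`[d_{a,b}, k_{c,d}] = -(ad-bc) k_{a+c,b+d} + δ_{a+c,0}δ_{b+d,0}(a k_s + b k_t)`,
with the `k`'s pairwise commuting and `k_s, k_t` central. -/
noncomputable def torBrk (u v : TorEALA) : TorEALA :=
  (torConv u.1 v.1,
   torConv u.1 v.2.1 - torConv v.1 u.2.1,
   (torCen u.1 v.2.1).1 - (torCen v.1 u.2.1).1,
   (torCen u.1 v.2.1).2 - (torCen v.1 u.2.1).2)

/-!
The `k`'s together with `k_s, k_t` span an abelian ideal `V`, so the bracket is determined by the
bracket `torConv` of the `d`'s and by the action `torAct` of the `d`'s on `V`. The Jacobi identity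
then splits into the Jacobi identity for `torConv` and the statement that `torAct` is a
representation of the `d`'s on `V`; the former follows from the `d`-component of the latter
together with antisymmetry of `torConv`. Everything is trilinear, so it suffices to check basis
elements, where it is a polynomial identity in the indices (the central part being supported on
`p + q + r = 0`).
-/

theorem Finsupp.eq_zero_of_additive {α R M : Type*} [AddZeroClass R] [AddGroup M]
    (f : (α →₀ R) → M) (hadd : ∀ x y, f (x + y) = f x + f y)
    (hsingle : ∀ a r, f (Finsupp.single a r) = 0) (x : α →₀ R) : f x = 0 :=
  DFunLike.congr_fun (Finsupp.addHom_ext (f := AddMonoidHom.mk' f hadd) (g := 0) hsingle) x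

theorem Finsupp.eq_zero_of_triadditive {α R M : Type*} [AddZeroClass R] [AddGroup M]
    (T : (α →₀ R) → (α →₀ R) → (α →₀ R) → M)
    (hadd₁ : ∀ a a' b c, T (a + a') b c = T a b c + T a' b c)
    (hadd₂ : ∀ a b b' c, T a (b + b') c = T a b c + T a b' c)
    (hadd₃ : ∀ a b c c', T a b (c + c') = T a b c + T a b c')
    (hsingle : ∀ p q r α β γ,
      T (Finsupp.single p α) (Finsupp.single q β) (Finsupp.single r γ) = 0)
    (a b c : α →₀ R) : T a b c = 0 := by
  refine Finsupp.eq_zero_of_additive (T · b c) (hadd₁ · · b c) (fun p α => ?_) a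
  refine Finsupp.eq_zero_of_additive (T _ · c) (hadd₂ _ · · c) (fun q β => ?_) b
  exact Finsupp.eq_zero_of_additive (T _ _ ·) (hadd₃ _ _) (fun r γ => hsingle p q r α β γ) c

lemma torConv_single_single (p q : ℤ × ℤ) (α β : ℚ) :
    torConv (Finsupp.single p α) (Finsupp.single q β)
      = Finsupp.single (p + q) (((-(p.1 * q.2 - p.2 * q.1) : ℤ) : ℚ) * α * β) := by
  rw [torConv, Finsupp.sum_single_index, Finsupp.sum_single_index] <;> simp

lemma torConv_swap (x y : TorCoef) : torConv y x = -torConv x y := by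
  unfold torConv
  rw [Finsupp.sum_comm]
  simp only [Finsupp.sum, ← Finset.sum_neg_distrib, ← Finsupp.single_neg]
  refine Finset.sum_congr rfl fun p _ => Finset.sum_congr rfl fun q _ => ?_
  rw [add_comm]
  congr 1
  push_cast
  ring

lemma torConv_add_left (x x' y : TorCoef) :
    torConv (x + x') y = torConv x y + torConv x' y := by
  unfold torConv
  rw [Finsupp.sum_add_index'] <;> intros <;>
    simp [mul_add, add_mul, Finsupp.single_add, Finsupp.sum_add]

lemma torConv_add_right (x y y' : TorCoef) :
    torConv x (y + y') = torConv x y + torConv x y' := by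
  rw [torConv_swap, torConv_add_left, neg_add, ← torConv_swap, ← torConv_swap]

lemma torConv_neg_right (x y : TorCoef) : torConv x (-y) = -torConv x y :=
  map_neg (AddMonoidHom.mk' (torConv x) (torConv_add_right x)) y

lemma torCen_single_single (p q : ℤ × ℤ) (α β : ℚ) :
    torCen (Finsupp.single p α) (Finsupp.single q β)
      = if q = -p then (α * β * p.1, α * β * p.2) else 0 := by
  rw [torCen, Finsupp.sum_single_index, Finsupp.sum_single_index]
  · split_ifs with h <;> simp [h, Prod.ext_iff]
  all_goals simp

lemma torCen_add_left (x x' y : TorCoef) :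
    torCen (x + x') y = torCen x y + torCen x' y := by
  unfold torCen
  rw [Finsupp.sum_add_index', Finsupp.sum_add_index'] <;> intros <;> simp [add_mul]

lemma torCen_add_right (x y y' : TorCoef) :
    torCen x (y + y') = torCen x y + torCen x y' := by
  simp only [torCen, Finsupp.add_apply, Prod.mk_add_mk, ← Finsupp.sum_add, mul_add, add_mul]

noncomputable def torAct (a c : TorCoef) : TorCoef × ℚ × ℚ := (torConv a c, torCen a c)

lemma torAct_fst (a c : TorCoef) : (torAct a c).1 = torConv a c := rfl

lemma torAct_add_left (x x' y : TorCoef) :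
    torAct (x + x') y = torAct x y + torAct x' y := by
  simp only [torAct, torConv_add_left, torCen_add_left, Prod.mk_add_mk]

lemma torAct_add_right (x y y' : TorCoef) :
    torAct x (y + y') = torAct x y + torAct x y' := by
  simp only [torAct, torConv_add_right, torCen_add_right, Prod.mk_add_mk]

lemma torAct_sub_right (x y y' : TorCoef) :
    torAct x (y - y') = torAct x y - torAct x y' :=
  map_sub (AddMonoidHom.mk' (torAct x) (torAct_add_right x)) y y'

lemma torAct_leibniz_single (p q r : ℤ × ℤ) (α β γ : ℚ) :
    torAct (torConv (Finsupp.single p α) (Finsupp.single q β)) (Finsupp.single r γ)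
      = torAct (Finsupp.single p α) (torConv (Finsupp.single q β) (Finsupp.single r γ))
        - torAct (Finsupp.single q β) (torConv (Finsupp.single p α) (Finsupp.single r γ)) := by
  simp only [torAct, torConv_single_single, torCen_single_single, Prod.mk_sub_mk,
    ← Finsupp.single_sub, add_assoc, add_left_comm q p r]
  congr 1
  · congr 1
    simp only [Prod.fst_add, Prod.snd_add]
    push_cast
    ring
  obtain rfl | hr := eq_or_ne r (-(p + q))
  · rw [if_pos rfl, if_pos (by abel), if_pos (by abel)]
    simp only [Prod.mk_sub_mk, Prod.fst_add, Prod.snd_add, Prod.fst_neg, Prod.snd_neg]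
    ext <;> push_cast <;> ring
  · rw [if_neg hr, if_neg fun h => hr (by linear_combination h),
      if_neg fun h => hr (by linear_combination h), sub_zero]

lemma torAct_leibniz (a b c : TorCoef) :
    torAct (torConv a b) c = torAct a (torConv b c) - torAct b (torConv a c) := by
  refine sub_eq_zero.mp (Finsupp.eq_zero_of_triadditive
    (fun a b c => torAct (torConv a b) c - (torAct a (torConv b c) - torAct b (torConv a c)))
    ?_ ?_ ?_ (fun p q r α β γ => sub_eq_zero.mpr (torAct_leibniz_single p q r α β γ)) a b c) <;>
  · intros
    simp only [torConv_add_left, torConv_add_right, torAct_add_left, torAct_add_right]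
    abel

lemma torConv_jacobi (a b c : TorCoef) :
    torConv (torConv a b) c + torConv (torConv b c) a + torConv (torConv c a) b = 0 := by
  have h := congrArg Prod.fst (torAct_leibniz a b c)
  simp only [torAct_fst, Prod.fst_sub] at h
  rw [h, torConv_swap a (torConv b c), torConv_swap b (torConv c a), torConv_swap a c,
    torConv_neg_right]
  abel

lemma torBrk_fst (u v : TorEALA) : (torBrk u v).1 = torConv u.1 v.1 := rfl

lemma torBrk_snd (u v : TorEALA) : (torBrk u v).2 = torAct u.1 v.2.1 - torAct v.1 u.2.1 := rfl

/-- the bracket of the toroidal extended affine Lie algebra of `𝔤𝔩₀`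
satisfies the Jacobi identity. -/
theorem toroidal_EALA_jacobi (x y z : TorEALA) :
    torBrk (torBrk x y) z + torBrk (torBrk y z) x + torBrk (torBrk z x) y = 0 := by
  refine Prod.ext (torConv_jacobi x.1 y.1 z.1) ?_
  simp only [Prod.snd_add, Prod.snd_zero, torBrk_snd, torBrk_fst, Prod.fst_sub, torAct_fst,
    torAct_sub_right, torAct_leibniz]
  abel
end

section
/- For the standard Heisenberg Lie algebra with generators J_n (n ∈ ℤ) and central c satisfying [J_n, J_m] = n δ_{n+m,0} c, the Fock module generated from a vacuum annihilated by J_n for n ≥ 0, on which c acts by 1, is irreducible. -/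
/-! Sending a polynomial `p(x₁, x₂, …)` to `p(J₋₁, J₋₂, …)·vac` is well defined because the
negative modes commute, and the Heisenberg relations together with `J_k vac = 0` (`k ≥ 0`) say
that it intertwines `J_k` with `k ∂/∂x_k` for `k > 0` and with `0` for `k = 0`. Its image is
therefore stable under all `J_n` and contains `vac`, so the map is onto. The preimage of a nonzero
submodule `N` is then a nonzero space of polynomials closed under all partial derivatives;
differentiating lowers the total degree until a nonzero constant is reached, so it contains `1`,
i.e. `vac ∈ N`, and `N` is everything. -/

open MvPolynomial

namespace MvPolynomial

variable {R σ A : Type*} [CommSemiring R] [Semiring A] [Algebra R A]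

theorem totalDegree_pderiv_lt {p : MvPolynomial σ R} {i : σ} (h : pderiv i p ≠ 0) :
    (pderiv i p).totalDegree < p.totalDegree := by
  classical
  have hmem : ∀ m ∈ (pderiv i p).support, m + Finsupp.single i 1 ∈ p.support := by
    intro m hm
    rw [mem_support_iff, coeff_pderiv] at hm
    exact mem_support_iff.2 (left_ne_zero_of_mul hm)
  have hlt : ∀ m ∈ (pderiv i p).support, m.degree < p.totalDegree := fun m hm =>
    calc m.degree < (m + Finsupp.single i 1).degree := by simp
      _ ≤ p.totalDegree := le_totalDegree (hmem m hm)
  obtain ⟨m, hm⟩ := support_nonempty.2 h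
  exact (Finset.sup_lt_iff (by simpa using (Nat.zero_le _).trans_lt (hlt m hm))).2 hlt

theorem eq_C_of_forall_pderiv_eq_zero [NoZeroDivisors R] [CharZero R] {p : MvPolynomial σ R}
    (h : ∀ i, pderiv i p = 0) : p = C (coeff 0 p) := by
  classical
  ext m
  rw [coeff_C]
  split_ifs with hm
  · rw [hm]
  obtain ⟨i, hi⟩ : ∃ i, m i ≠ 0 := by
    by_contra! h0
    exact hm (Finsupp.ext h0).symm
  have hle : Finsupp.single i 1 ≤ m := Finsupp.single_le_iff.2 (Nat.one_le_iff_ne_zero.2 hi)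
  obtain ⟨m', rfl⟩ : ∃ m', m = m' + Finsupp.single i 1 :=
    ⟨m - Finsupp.single i 1, (tsub_add_cancel_of_le hle).symm⟩
  have := coeff_pderiv (i := i) p m'
  rw [h i, coeff_zero, eq_comm, mul_eq_zero] at this
  exact this.resolve_right (Nat.cast_add_one_ne_zero _)

theorem one_mem_of_forall_pderiv_mem {K : Type*} [Field K] [CharZero K]
    {N : Submodule K (MvPolynomial σ K)} (hN : ∀ i, ∀ p ∈ N, pderiv i p ∈ N)
    {p : MvPolynomial σ K} (hp : p ∈ N) (hp0 : p ≠ 0) : 1 ∈ N := by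
  induction hd : p.totalDegree using Nat.strong_induction_on generalizing p with
  | _ d ih =>
  by_cases hconst : ∀ i, pderiv i p = 0
  · obtain ⟨c, rfl⟩ : ∃ c, p = C c := ⟨_, eq_C_of_forall_pderiv_eq_zero hconst⟩
    have hc0 : c ≠ 0 := by rintro rfl; exact hp0 C_0
    simpa [smul_eq_C_mul, ← C_mul, hc0] using N.smul_mem c⁻¹ hp
  · push Not at hconst
    obtain ⟨i, hi⟩ := hconst
    exact ih _ (hd ▸ totalDegree_pderiv_lt hi) (hN i p hp) hi rfl

open scoped IsMulCommutative in
noncomputable def aevalOfCommute (a : σ → A) (ha : ∀ i j, Commute (a i) (a j)) :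
    MvPolynomial σ R →ₐ[R] A :=
  haveI := Algebra.isMulCommutative_adjoin R (s := Set.range a) <| by
    rintro _ ⟨i, rfl⟩ _ ⟨j, rfl⟩
    exact ha i j
  (Algebra.adjoin R (Set.range a)).val.comp
    (aeval fun i => ⟨a i, Algebra.subset_adjoin ⟨i, rfl⟩⟩)

@[simp]
theorem aevalOfCommute_X (a : σ → A) (ha : ∀ i j, Commute (a i) (a j)) (i : σ) :
    aevalOfCommute (R := R) a ha (X i) = a i := by
  simp [aevalOfCommute]

end MvPolynomial

section Heisenberg

variable {K V : Type*} [Field K] [AddCommGroup V] [Module K V]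

def IsHeisenbergRep (J : ℤ → Module.End K V) : Prop :=
  ∀ n m : ℤ, J n * J m - J m * J n = (if n + m = 0 then (n : K) else 0) • (1 : Module.End K V)

namespace IsHeisenbergRep

variable {J : ℤ → Module.End K V}

theorem apply_apply (hJ : IsHeisenbergRep J) (n m : ℤ) (v : V) :
    J n (J m v) = J m (J n v) + (if n + m = 0 then (n : K) else 0) • v := by
  rw [← sub_eq_iff_eq_add', ← Module.End.mul_apply, ← Module.End.mul_apply,
    ← LinearMap.sub_apply, hJ n m, LinearMap.smul_apply, Module.End.one_apply]

theorem commute (hJ : IsHeisenbergRep J) {n m : ℤ} (h : n + m ≠ 0) : Commute (J n) (J m) :=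
  sub_eq_zero.1 <| by rw [hJ n m, if_neg h, zero_smul]

noncomputable def fockMap (hJ : IsHeisenbergRep J) (vac : V) : MvPolynomial ℕ K →ₗ[K] V :=
  LinearMap.applyₗ vac ∘ₗ
    (aevalOfCommute (fun i : ℕ => J (-((i : ℤ) + 1)))
      fun _ _ => hJ.commute (by omega)).toLinearMap

variable (hJ : IsHeisenbergRep J) (vac : V)

theorem fockMap_C (a : K) : hJ.fockMap vac (C a) = a • vac := by
  simp [fockMap, Algebra.algebraMap_eq_smul_one]

theorem fockMap_one : hJ.fockMap vac 1 = vac := by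
  simpa using hJ.fockMap_C vac 1

theorem fockMap_mul_X (p : MvPolynomial ℕ K) (i : ℕ) :
    hJ.fockMap vac (p * X i) = J (-((i : ℤ) + 1)) (hJ.fockMap vac p) := by
  simp [fockMap, mul_comm p]

theorem apply_fockMap_zero (hvac : J 0 vac = 0) (p : MvPolynomial ℕ K) :
    J 0 (hJ.fockMap vac p) = 0 := by
  induction p using MvPolynomial.induction_on with
  | C a => rw [fockMap_C, map_smul, hvac, smul_zero]
  | add p q hp hq => rw [map_add, map_add, hp, hq, add_zero]
  | mul_X p i hp =>
    rw [fockMap_mul_X, hJ.apply_apply, hp, map_zero, if_neg (by omega), zero_smul, add_zero]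

theorem apply_fockMap_succ (k : ℕ) (hvac : J ((k : ℤ) + 1) vac = 0) (p : MvPolynomial ℕ K) :
    J ((k : ℤ) + 1) (hJ.fockMap vac p) = ((k : K) + 1) • hJ.fockMap vac (pderiv k p) := by
  induction p using MvPolynomial.induction_on with
  | C a => rw [fockMap_C, map_smul, hvac, smul_zero, pderiv_C, map_zero, smul_zero]
  | add p q hp hq => rw [map_add, map_add, hp, hq, map_add, map_add, smul_add]
  | mul_X p i hp =>
    rw [fockMap_mul_X, hJ.apply_apply, hp, pderiv_mul, map_add, fockMap_mul_X, map_smul, smul_add]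
    congr 1
    obtain rfl | hki := eq_or_ne k i
    · simp
    · rw [if_neg (by omega)]
      simp [pderiv_X_of_ne hki.symm]

theorem fockMap_surjective (hann : ∀ n : ℤ, 0 ≤ n → J n vac = 0)
    (hgen : ∀ N : Submodule K V, (∀ n : ℤ, ∀ v ∈ N, J n v ∈ N) → vac ∈ N → N = ⊤) :
    Function.Surjective (hJ.fockMap vac) := by
  rw [← LinearMap.range_eq_top]
  refine hgen _ (fun n => ?_) ⟨1, hJ.fockMap_one vac⟩
  rintro _ ⟨p, rfl⟩
  rcases lt_trichotomy n 0 with hn | rfl | hn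
  · obtain ⟨i, rfl⟩ : ∃ i : ℕ, n = -((i : ℤ) + 1) := ⟨(-n - 1).toNat, by omega⟩
    exact ⟨p * X i, hJ.fockMap_mul_X vac p i⟩
  · rw [hJ.apply_fockMap_zero vac (hann 0 le_rfl)]
    exact zero_mem _
  · obtain ⟨k, rfl⟩ : ∃ k : ℕ, n = (k : ℤ) + 1 := ⟨(n - 1).toNat, by omega⟩
    rw [hJ.apply_fockMap_succ vac k (hann _ hn.le)]
    exact Submodule.smul_mem _ _ ⟨_, rfl⟩

theorem pderiv_mem_comap_fockMap [CharZero K] (hann : ∀ n : ℤ, 0 ≤ n → J n vac = 0)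
    {N : Submodule K V} (hN : ∀ n : ℤ, ∀ v ∈ N, J n v ∈ N) (k : ℕ) (p : MvPolynomial ℕ K)
    (hp : p ∈ N.comap (hJ.fockMap vac)) : pderiv k p ∈ N.comap (hJ.fockMap vac) := by
  have h := hN ((k : ℤ) + 1) _ hp
  rw [hJ.apply_fockMap_succ vac k (hann _ (by omega))] at h
  exact (N.smul_mem_iff (Nat.cast_add_one_ne_zero k)).1 h

end IsHeisenbergRep
end Heisenberg

theorem heisenberg_fock_irreducible_general
    (V : Type*) [AddCommGroup V] [Module ℂ V]
    (J : ℤ → Module.End ℂ V) (vac : V)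
    -- the Heisenberg relations, with the central element acting by 1:
    (hcomm : ∀ n m : ℤ, J n * J m - J m * J n
      = (if n + m = 0 then (n : ℂ) else 0) • (1 : Module.End ℂ V))
    -- the vacuum is annihilated by the nonnegative modes:
    (hann : ∀ n : ℤ, 0 ≤ n → J n vac = 0)
    -- V is generated from the vacuum by the action of the J_n:
    (hgen : ∀ N : Submodule ℂ V, (∀ n : ℤ, ∀ v ∈ N, J n v ∈ N) → vac ∈ N → N = ⊤) :
    ∀ N : Submodule ℂ V, (∀ n : ℤ, ∀ v ∈ N, J n v ∈ N) → N = ⊥ ∨ N = ⊤ := by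
  intro N hN
  refine or_iff_not_imp_left.2 fun hne => ?_
  have hJ : IsHeisenbergRep J := hcomm
  obtain ⟨v, hvN, hv0⟩ := Submodule.exists_mem_ne_zero_of_ne_bot hne
  obtain ⟨p, rfl⟩ := hJ.fockMap_surjective vac hann hgen v
  have h1 : (1 : MvPolynomial ℕ ℂ) ∈ N.comap (hJ.fockMap vac) :=
    MvPolynomial.one_mem_of_forall_pderiv_mem (hJ.pderiv_mem_comap_fockMap vac hann hN) hvN
      (by rintro rfl; exact hv0 (map_zero _))
  exact hgen N hN (by rwa [Submodule.mem_comap, hJ.fockMap_one] at h1)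

/-- for the standard Heisenberg Lie algebra with generators `J_n`
(`n ∈ ℤ`) and central `c` satisfying `[J_n, J_m] = n δ_{n+m,0} c`, the Fock
module generated from a vacuum annihilated by `J_n` for `n ≥ 0`, on which `c`
acts by `1`, is irreducible: any nonzero submodule is the whole module. -/
theorem heisenberg_fock_irreducible
    (V : Type*) [AddCommGroup V] [Module ℂ V]
    (J : ℤ → Module.End ℂ V) (vac : V) (hvac : vac ≠ 0)
    -- the Heisenberg relations, with the central element acting by 1:
    (hcomm : ∀ n m : ℤ, J n * J m - J m * J n
      = (if n + m = 0 then (n : ℂ) else 0) • (1 : Module.End ℂ V))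
    -- the vacuum is annihilated by the nonnegative modes:
    (hann : ∀ n : ℤ, 0 ≤ n → J n vac = 0)
    -- V is generated from the vacuum by the action of the J_n:
    (hgen : ∀ N : Submodule ℂ V, (∀ n : ℤ, ∀ v ∈ N, J n v ∈ N) → vac ∈ N → N = ⊤) :
    ∀ N : Submodule ℂ V, (∀ n : ℤ, ∀ v ∈ N, J n v ∈ N) → N = ⊥ ∨ N = ⊤ :=
  heisenberg_fock_irreducible_general V J vac hcomm hann hgen
end
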